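/- arXiv:0712.0069 — 3 statements merged into one kernel-verified Lean document; each statement's English description precedes it below -/
import Mathlib

section
/- Let the complex sequence z(s) satisfy, for every s, that z(s+1) and z(s−1) are the two roots of A₂(z(s))w² + A₁(z(s))w + A₀(z(s)) = 0, where A₀, A₁, A₂ ∈ ℂ[X] are polynomials with A₂ not identically zero, and suppose z takes infinitely many distinct values. Define W₁(x,y) = A₂(x)y² + A₁(x)y + A₀(x). Then W₁(x,y) and W₁(y,x), viewed as polynomials in two variables, have a nontrivial common factor (in particular, if W₁ is irreducible then W₁(x,y) = W₁(y,x), i.e., W₁ is symmetric). -/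
/-!
Write `W₁` as a polynomial `F` in `y` over `ℂ[x]`; then `W₂` is `swap F`. Both vanish at the
points `(z s, z (s+1))`, which have infinitely many distinct `x`-coordinates. If `F` and
`swap F` had no common factor, Gauss's lemma would make them coprime over `ℂ(x)`, so their
resultant `r ∈ ℂ[x]` would be nonzero; but `r = F p + (swap F) q` vanishes at every such
`x`, so `r = 0`.

If `W₁` is irreducible, a common factor forces `swap F = c F` for a constant `c`, and
`swap ∘ swap = id` gives `c = ±1`. For `c = -1`, `F` vanishes on the diagonal, so `y - x`
divides `F`, which is impossible for an irreducible `F` of degree `2` in `y`.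
-/

open MvPolynomial in
/-- View a one-variable polynomial as a polynomial in the variable `i` of a
two-variable polynomial ring. -/
noncomputable def liftVar (p : Polynomial ℂ) (i : Fin 2) :
    MvPolynomial (Fin 2) ℂ :=
  Polynomial.aeval (MvPolynomial.X i) p

open Polynomial Polynomial.Bivariate

namespace Polynomial

variable {R K : Type*} [CommRing R] [IsDomain R] [IsGCDMonoid R]
  [Field K] [Algebra R K] [IsFractionRing R K]

theorem exists_isPrimitive_map_associated {d : K[X]} (hd : d ≠ 0) :
    ∃ D : R[X], D.IsPrimitive ∧ Associated (D.map (algebraMap R K)) d := by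
  let := Classical.arbitrary (NormalizedGCDMonoid R)
  obtain ⟨b, hb, hN⟩ := IsLocalization.integerNormalization_spec (nonZeroDivisors R) d
  set N := IsLocalization.integerNormalization (nonZeroDivisors R) d
  have hφ := IsFractionRing.injective R K
  have hN0 : N ≠ 0 := IsFractionRing.integerNormalization_eq_zero_iff.not.mpr hd
  have hb0 : algebraMap R K b ≠ 0 := (map_ne_zero_iff _ hφ).mpr (nonZeroDivisors.ne_zero hb)
  have hc0 : algebraMap R K N.content ≠ 0 :=
    (map_ne_zero_iff _ hφ).mpr (content_eq_zero_iff.not.mpr hN0)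
  refine ⟨N.primPart, N.isPrimitive_primPart, ?_⟩
  have hmap : C (algebraMap R K N.content) * N.primPart.map (algebraMap R K) =
      C (algebraMap R K b) * d := by
    rw [← map_C, ← Polynomial.map_mul, ← N.eq_C_content_mul_primPart, hN, Algebra.smul_def,
      algebraMap_apply]
  exact (associated_unit_mul_left _ _ (isUnit_C.mpr hc0.isUnit)).symm.trans
    (hmap ▸ associated_unit_mul_left _ _ (isUnit_C.mpr hb0.isUnit))

theorem isCoprime_map_of_isRelPrime {f g : R[X]} (h : IsRelPrime f g) :
    IsCoprime (f.map (algebraMap R K)) (g.map (algebraMap R K)) := by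
  rw [← isRelPrime_iff_isCoprime]
  intro d hdf hdg
  rcases eq_or_ne d 0 with rfl | hd
  · have hinj := map_injective _ (IsFractionRing.injective R K)
    obtain rfl : f = 0 := hinj (by simpa using hdf)
    obtain rfl : g = 0 := hinj (by simpa using hdg)
    exact absurd h not_isRelPrime_zero_zero
  obtain ⟨D, hD, hDd⟩ := exists_isPrimitive_map_associated (R := R) hd
  have hDunit : IsUnit D := h (hD.dvd_of_fraction_map_dvd_fraction_map (hDd.dvd.trans hdf))
    (hD.dvd_of_fraction_map_dvd_fraction_map (hDd.dvd.trans hdg))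
  exact hDd.isUnit (hD.isUnit_iff_isUnit_map.mp hDunit)

theorem exists_mul_add_mul_eq_C_of_isRelPrime {f g : R[X]} (hf : f.natDegree ≠ 0)
    (h : IsRelPrime f g) : ∃ p q : R[X], ∃ r ≠ 0, f * p + g * q = C r := by
  obtain ⟨p, q, -, -, hpq⟩ := exists_mul_add_mul_eq_C_resultant f g le_rfl le_rfl (.inl hf)
  refine ⟨p, q, _, fun h0 => ?_, hpq⟩
  have hφ := IsFractionRing.injective R (FractionRing R)
  apply resultant_ne_zero _ _ (isCoprime_map_of_isRelPrime (K := FractionRing R) h)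
  rw [resultant, natDegree_map_eq_of_injective hφ, natDegree_map_eq_of_injective hφ,
    ← resultant, resultant_map_map, h0, map_zero]

end Polynomial

namespace Polynomial.Bivariate

theorem not_isRelPrime_of_infinite_common_zeros {k : Type*} [Field k] {f g : k[X][Y]}
    (hf : f.natDegree ≠ 0)
    (hzeros : {x | ∃ y, f.evalEval x y = 0 ∧ g.evalEval x y = 0}.Infinite) :
    ¬IsRelPrime f g := by
  intro hrel
  obtain ⟨p, q, r, hr, hpq⟩ := exists_mul_add_mul_eq_C_of_isRelPrime hf hrel
  refine hr (eq_zero_of_infinite_isRoot r (hzeros.mono ?_))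
  rintro x ⟨y, hfy, hgy⟩
  simpa [hfy, hgy, evalEval_C] using (congrArg (evalEval x y) hpq).symm

section CommSemiring

variable {R : Type*} [CommSemiring R]

theorem aevalAeval_X_X (F : R[X][Y]) : aevalAeval (X : R[X]) X F = F.eval X := by
  induction F using Polynomial.induction_on' with
  | add p q hp hq => rw [map_add, eval_add, hp, hq]
  | monomial n a => simp [← C_mul_X_pow_eq_monomial, eval_map, eval₂_C_X]

theorem evalEval_swap (x y : R) (F : R[X][Y]) : (swap F).evalEval x y = F.evalEval y x := by
  rw [← coe_aevalAeval_eq_evalEval, ← coe_aevalAeval_eq_evalEval]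
  exact aevalAeval_swap x y F

theorem equivMvPolynomial_symm_rename_swap (p : MvPolynomial (Fin 2) R) :
    (equivMvPolynomial R).symm (MvPolynomial.rename (Equiv.swap 0 1) p) =
      swap ((equivMvPolynomial R).symm p) := by
  have : (equivMvPolynomial R).symm.toAlgHom.comp (MvPolynomial.rename (Equiv.swap 0 1)) =
      swap.toAlgHom.comp (equivMvPolynomial R).symm.toAlgHom := by
    apply MvPolynomial.algHom_ext
    intro i
    fin_cases i <;> simp [swap_X, swap_Y]
  exact congrArg (fun φ => φ p) this

end CommSemiring

variable {R : Type*} [CommRing R] [IsDomain R]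

theorem associated_swap_of_irreducible {F : R[X][Y]} (hF : Irreducible F)
    (h : ¬IsRelPrime F (swap F)) : Associated F (swap F) := by
  have hdvd : F ∣ swap F := hF.dvd_or_isRelPrime.resolve_right h
  refine associated_of_dvd_dvd hdvd ?_
  simpa only [swap_swap_apply] using _root_.map_dvd (swap (R := R)) hdvd

theorem swap_eq_or_eq_neg_of_associated {F : R[X][Y]} (hF : F ≠ 0)
    (h : Associated F (swap F)) : swap F = F ∨ swap F = -F := by
  obtain ⟨u, hu⟩ := h
  obtain ⟨c, hc⟩ : ∃ c : R, (u : R[X][Y]) = C (C c) := by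
    obtain ⟨p, hp, hpu⟩ := isUnit_iff.mp u.isUnit
    obtain ⟨c, -, rfl⟩ := isUnit_iff.mp hp
    exact ⟨c, hpu.symm⟩
  have hcc : c * c = 1 := by
    have hu2 : F * (↑u * ↑u) = F * 1 :=
      calc F * (↑u * ↑u) = swap (swap F) := by
            rw [← hu, map_mul, ← hu, hc, swap_C_C, mul_assoc]
        _ = F * 1 := by rw [swap_swap_apply, mul_one]
    have := mul_left_cancel₀ hF hu2
    rwa [hc, ← C_mul, ← C_mul, ← C_1, C_inj, ← C_1, C_inj] at this
  rcases mul_self_eq_one_iff.mp hcc with rfl | rfl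
  · left
    rw [← hu, hc, C_1, C_1, mul_one]
  · right
    rw [← hu, hc, C_neg, C_neg, C_1, C_1]
    exact mul_neg_one F

variable [CharZero R]

theorem X_sub_C_X_dvd_of_swap_eq_neg {F : R[X][Y]} (h : swap F = -F) : X - C X ∣ F := by
  have hdiag := congrArg (aevalAeval (X : R[X]) X) h
  rw [aevalAeval_swap, map_neg, aevalAeval_X_X] at hdiag
  exact dvd_iff_isRoot.mpr (self_eq_neg.mp hdiag)

theorem swap_eq_self_of_irreducible {F : R[X][Y]} (hF : Irreducible F) (hdeg : F.natDegree ≠ 1)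
    (h : ¬IsRelPrime F (swap F)) : swap F = F := by
  refine (swap_eq_or_eq_neg_of_associated hF.ne_zero
    (associated_swap_of_irreducible hF h)).resolve_right fun hneg => hdeg ?_
  have hassoc := (irreducible_X_sub_C X).associated_of_dvd hF (X_sub_C_X_dvd_of_swap_eq_neg hneg)
  rw [← natDegree_X_sub_C (X : R[X])]
  exact natDegree_eq_of_degree_eq (degree_eq_degree_of_associated hassoc).symm

end Polynomial.Bivariate

theorem equivMvPolynomial_symm_liftVar_zero (A : ℂ[X]) :
    (equivMvPolynomial ℂ).symm (liftVar A 0) = C A := by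
  rw [liftVar, ← aeval_algHom_apply, equivMvPolynomial_symm_X_0]
  change aeval (algebraMap ℂ[X] ℂ[X][Y] X) A = _
  rw [aeval_algebraMap_apply, aeval_X_left_apply]
  rfl

open MvPolynomial in
/-- If for every `s` both `z (s+1)` and `z (s-1)` are roots of
`A₂(z s) w² + A₁(z s) w + A₀(z s) = 0`, with `z` injective and `A₂ ≠ 0`, then
`W₁(x,y) = A₂(x)y² + A₁(x)y + A₀(x)` and `W₁(y,x)` have a nontrivial
(nonconstant, non-unit) common factor; in particular, if `W₁` is irreducible
then `W₁(x,y) = W₁(y,x)`, i.e. `W₁` is symmetric. -/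
theorem stmt10 (z : ℤ → ℂ) (hz : Function.Injective z)
    (A₀ A₁ A₂ : Polynomial ℂ) (hA₂ : A₂ ≠ 0)
    (hroot : ∀ s : ℤ,
      A₂.eval (z s) * z (s + 1) ^ 2 + A₁.eval (z s) * z (s + 1) + A₀.eval (z s) = 0 ∧
      A₂.eval (z s) * z (s - 1) ^ 2 + A₁.eval (z s) * z (s - 1) + A₀.eval (z s) = 0)
    (W₁ W₂ : MvPolynomial (Fin 2) ℂ)
    (hW₁ : W₁ = liftVar A₂ 0 * (X 1) ^ 2 + liftVar A₁ 0 * X 1 + liftVar A₀ 0)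
    (hW₂ : W₂ = MvPolynomial.rename (Equiv.swap (0 : Fin 2) 1) W₁) :
    (∃ g : MvPolynomial (Fin 2) ℂ, ¬ IsUnit g ∧ g ≠ 0 ∧ g ∣ W₁ ∧ g ∣ W₂) ∧
    (Irreducible W₁ → W₁ = W₂) := by
  set e := (equivMvPolynomial ℂ).symm
  have hF : e W₁ = Polynomial.C A₂ * Y ^ 2 + Polynomial.C A₁ * Y + Polynomial.C A₀ := by
    simp [e, hW₁, equivMvPolynomial_symm_liftVar_zero]
  have hW₂F : e W₂ = swap (e W₁) := by rw [hW₂, equivMvPolynomial_symm_rename_swap]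
  have hdeg : (e W₁).natDegree = 2 := hF ▸ natDegree_quadratic hA₂
  have hF_eval (x y : ℂ) :
      (e W₁).evalEval x y = A₂.eval x * y ^ 2 + A₁.eval x * y + A₀.eval x := by
    simp [hF, evalEval_C]
  have hrel : ¬IsRelPrime (e W₁) (swap (e W₁)) := by
    refine not_isRelPrime_of_infinite_common_zeros (by omega)
      ((Set.infinite_range_of_injective hz).mono ?_)
    rintro _ ⟨s, rfl⟩
    refine ⟨z (s + 1), (hF_eval _ _).trans (hroot s).1, ?_⟩
    rw [evalEval_swap, hF_eval]
    simpa using (hroot (s + 1)).2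
  have hrelW : ¬IsRelPrime W₁ W₂ := fun h =>
    hrel (hW₂F ▸ IsRelPrime.of_map (equivMvPolynomial ℂ) (by simpa [e] using h))
  constructor
  · simp only [IsRelPrime, not_forall] at hrelW
    obtain ⟨g, hg₁, hg₂, hg⟩ := hrelW
    have hW₁0 : W₁ ≠ 0 := fun h => by simp [h] at hdeg
    exact ⟨g, hg, ne_zero_of_dvd_ne_zero hW₁0 hg₁, hg₁, hg₂⟩
  · intro hirr
    apply e.injective
    rw [hW₂F]
    exact (swap_eq_self_of_irreducible (hirr.map e) (by omega) hrel).symm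
end

section
/- Suppose R_n ∈ ℂ[X] has degree exactly n with leading coefficient ω_n ≠ 0 for all n ≥ 2, and R_{n+2}(x) = v(x)R_{n+1}(x) − u(x)R_n(x) for all n ≥ 2, where v(x) = −(α₂x² + α₄x + α₅)/(α₁x² + α₂x + α₃), u(x) = (α₃x² + α₅x + α₆)/(α₁x² + α₂x + α₃), as an identity of rational functions. Then α₁ = 0. -/
/-!
If `α₁ ≠ 0`, the left side `(α₁x² + α₂x + α₃) R_{n+2}` has degree `n + 4`, while both terms of the
right side have degree at most `2 + (n + 1) = n + 3`.
-/

namespace Polynomial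

theorem degree_quadratic_mul_le {S : Type*} [Semiring S] (a b c : S) (p : S[X]) :
    ((C a * X ^ 2 + C b * X + C c) * p).degree ≤ 2 + p.degree :=
  (degree_mul_le _ _).trans (add_le_add_left degree_quadratic_le _)

theorem eq_zero_of_quadratic_mul_eq_of_degree {S : Type*} [CommRing S] [IsDomain S]
    {n : ℕ} {p q r : S[X]}
    (hp : p.degree = (n + 2 : ℕ)) (hq : q.degree = (n + 1 : ℕ)) (hr : r.degree = n)
    {a b c a' b' c' a'' b'' c'' : S}
    (h : (C a * X ^ 2 + C b * X + C c) * p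
        = -(C a' * X ^ 2 + C b' * X + C c') * q - (C a'' * X ^ 2 + C b'' * X + C c'') * r) :
    a = 0 := by
  by_contra ha
  have hlhs : ((C a * X ^ 2 + C b * X + C c) * p).degree = ((n + 4 : ℕ) : WithBot ℕ) := by
    rw [degree_mul, degree_quadratic ha, hp]
    norm_cast
    omega
  have hrhs : (-(C a' * X ^ 2 + C b' * X + C c') * q
      - (C a'' * X ^ 2 + C b'' * X + C c'') * r).degree ≤ ((n + 3 : ℕ) : WithBot ℕ) := by
    refine (degree_sub_le _ _).trans (max_le ?_ ?_)
    · rw [neg_mul, degree_neg]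
      refine (degree_quadratic_mul_le _ _ _ q).trans ?_
      rw [hq]
      exact_mod_cast le_of_eq (by ring)
    · refine (degree_quadratic_mul_le _ _ _ r).trans ?_
      rw [hr]
      exact_mod_cast (by omega : 2 + n ≤ n + 3)
  rw [← h, hlhs] at hrhs
  norm_cast at hrhs
  omega

end Polynomial

open Polynomial in
theorem stmt13_general (R : ℕ → Polynomial ℂ)
    (hdeg : ∀ n : ℕ, 2 ≤ n → (R n).degree = n)
    (α₁ α₂ α₃ α₄ α₅ α₆ : ℂ)
    (hrec : ∀ n : ℕ, 2 ≤ n →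
      (C α₁ * X ^ 2 + C α₂ * X + C α₃) * R (n + 2)
        = -(C α₂ * X ^ 2 + C α₄ * X + C α₅) * R (n + 1)
          - (C α₃ * X ^ 2 + C α₅ * X + C α₆) * R n) :
    α₁ = 0 :=
  eq_zero_of_quadratic_mul_eq_of_degree (hdeg 4 (by norm_num)) (hdeg 3 (by norm_num))
    (hdeg 2 le_rfl) (hrec 2 le_rfl)

open Polynomial in
/-- If `R n` has exact degree `n` (for `n ≥ 2`) and the recurrence
`R (n+2) = v * R (n+1) - u * R n` holds as an identity of rational functions,
where `v = -(α₂x² + α₄x + α₅)/(α₁x² + α₂x + α₃)` and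
`u = (α₃x² + α₅x + α₆)/(α₁x² + α₂x + α₃)` (denominator not identically zero),
then `α₁ = 0`. -/
theorem stmt13 (R : ℕ → Polynomial ℂ)
    (hdeg : ∀ n : ℕ, 2 ≤ n → (R n).degree = n)
    (α₁ α₂ α₃ α₄ α₅ α₆ : ℂ)
    (hden : (C α₁ * X ^ 2 + C α₂ * X + C α₃ : Polynomial ℂ) ≠ 0)
    (hrec : ∀ n : ℕ, 2 ≤ n →
      (C α₁ * X ^ 2 + C α₂ * X + C α₃) * R (n + 2)
        = -(C α₂ * X ^ 2 + C α₄ * X + C α₅) * R (n + 1)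
          - (C α₃ * X ^ 2 + C α₅ * X + C α₆) * R n) :
    α₁ = 0 :=
  stmt13_general R hdeg α₁ α₂ α₃ α₄ α₅ α₆ hrec
end

section
/- Under the hypotheses of the previous statement with α₁ = 0: if additionally α₂ ≠ 0, then the leading coefficients satisfy ω_{n+2} = −ω_{n+1} for all n ≥ 2, hence λ_{n+2} = λ_n where λ_n − λ_{n−1} = ω_n; i.e., the spectrum is degenerate. -/
open Polynomial

/-! Compare the coefficients of `X ^ (n + 3)` in the recurrence: the left side gives
`α₂ ω (n + 2)`, the right side `-α₂ ω (n + 1)`, since `R n` is too short to reach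
that degree. -/

section RecurrenceCoeff

variable {K : Type*} [Ring K]

theorem coeff_linear_mul_succ {p : K[X]} {d : ℕ} (a b : K) (hp : p.natDegree ≤ d) :
    ((C a * X + C b) * p).coeff (d + 1) = a * p.coeff d := by
  rw [add_mul, coeff_add, mul_assoc, coeff_C_mul, coeff_X_mul, coeff_C_mul,
    coeff_eq_zero_of_natDegree_lt (n := d + 1) (by omega), mul_zero, add_zero]

theorem coeff_quadratic_mul_add_two {p : K[X]} {d : ℕ} (a b c : K) (hp : p.natDegree ≤ d) :
    ((C a * X ^ 2 + C b * X + C c) * p).coeff (d + 2) = a * p.coeff d := by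
  rw [add_mul, add_mul, coeff_add, coeff_add, mul_assoc, mul_assoc, coeff_C_mul, coeff_C_mul,
    coeff_C_mul, coeff_X_pow_mul, coeff_X_mul,
    coeff_eq_zero_of_natDegree_lt (n := d + 1) (by omega),
    coeff_eq_zero_of_natDegree_lt (n := d + 2) (by omega), mul_zero, mul_zero, add_zero, add_zero]

theorem coeff_eq_neg_of_recurrence [NoZeroDivisors K] {a b c e f : K} (ha : a ≠ 0)
    {P Q S : K[X]} {m : ℕ} (hP : P.natDegree ≤ m + 2) (hQ : Q.natDegree ≤ m + 1)
    (hS : S.natDegree ≤ m)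
    (hrec : (C a * X + C b) * P
      = -(C a * X ^ 2 + C c * X + C e) * Q - (C b * X ^ 2 + C e * X + C f) * S) :
    P.coeff (m + 2) = -Q.coeff (m + 1) := by
  have h := congrArg (coeff · (m + 3)) hrec
  simp only [neg_mul, coeff_sub, coeff_neg] at h
  rw [coeff_linear_mul_succ a b hP, coeff_quadratic_mul_add_two a c e hQ,
    coeff_quadratic_mul_add_two b e f (hS.trans m.le_succ),
    coeff_eq_zero_of_natDegree_lt (p := S) (n := m + 1) (by omega), mul_zero, sub_zero,
    ← mul_neg] at h
  exact mul_left_cancel₀ ha h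

end RecurrenceCoeff

open Polynomial in
theorem stmt14_general (R : ℕ → Polynomial ℂ)
    (hdeg : ∀ n : ℕ, 2 ≤ n → (R n).degree = n)
    (ω lam : ℕ → ℂ)
    (hω : ∀ n : ℕ, 2 ≤ n → ω n = (R n).leadingCoeff)
    (hlam : ∀ n : ℕ, 1 ≤ n → ω n = lam n - lam (n - 1))
    (α₂ α₃ α₄ α₅ α₆ : ℂ) (hα₂ : α₂ ≠ 0)
    (hrec : ∀ n : ℕ, 2 ≤ n →
      (C α₂ * X + C α₃) * R (n + 2)
        = -(C α₂ * X ^ 2 + C α₄ * X + C α₅) * R (n + 1)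
          - (C α₃ * X ^ 2 + C α₅ * X + C α₆) * R n) :
    (∀ n : ℕ, 2 ≤ n → ω (n + 2) = -ω (n + 1)) ∧
    (∀ n : ℕ, 2 ≤ n → lam (n + 2) = lam n) := by
  have hnat : ∀ n, 2 ≤ n → (R n).natDegree = n := fun n hn =>
    natDegree_eq_of_degree_eq_some (hdeg n hn)
  have hcoeff : ∀ n, 2 ≤ n → (R n).coeff n = ω n := fun n hn => by
    rw [hω n hn, leadingCoeff, hnat n hn]
  have hstep : ∀ n, 2 ≤ n → ω (n + 2) = -ω (n + 1) := fun n hn => by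
    rw [← hcoeff _ (by omega), ← hcoeff _ (by omega)]
    exact coeff_eq_neg_of_recurrence hα₂ (hnat _ (by omega)).le (hnat _ (by omega)).le
      (hnat n hn).le (hrec n hn)
  refine ⟨hstep, fun n hn => ?_⟩
  have h₂ : ω (n + 2) = lam (n + 2) - lam (n + 1) := hlam (n + 2) (by omega)
  have h₁ : ω (n + 1) = lam (n + 1) - lam n := hlam (n + 1) (by omega)
  linear_combination hstep n hn - h₂ - h₁

open Polynomial in
/-- With `α₁ = 0`: if moreover `α₂ ≠ 0`, then the leading coefficients
`ω n = λ n - λ (n-1)` of the `R n` satisfy `ω (n+2) = -ω (n+1)` for `n ≥ 2`,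
hence `λ (n+2) = λ n` for `n ≥ 2`, i.e. the spectrum is degenerate. -/
theorem stmt14 (R : ℕ → Polynomial ℂ)
    (hdeg : ∀ n : ℕ, 2 ≤ n → (R n).degree = n)
    (ω lam : ℕ → ℂ)
    (hω : ∀ n : ℕ, 2 ≤ n → ω n = (R n).leadingCoeff)
    (hω0 : ∀ n : ℕ, 2 ≤ n → ω n ≠ 0)
    (hlam : ∀ n : ℕ, 1 ≤ n → ω n = lam n - lam (n - 1))
    (α₂ α₃ α₄ α₅ α₆ : ℂ) (hα₂ : α₂ ≠ 0)
    (hden : (C α₂ * X + C α₃ : Polynomial ℂ) ≠ 0)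
    (hrec : ∀ n : ℕ, 2 ≤ n →
      (C α₂ * X + C α₃) * R (n + 2)
        = -(C α₂ * X ^ 2 + C α₄ * X + C α₅) * R (n + 1)
          - (C α₃ * X ^ 2 + C α₅ * X + C α₆) * R n) :
    (∀ n : ℕ, 2 ≤ n → ω (n + 2) = -ω (n + 1)) ∧
    (∀ n : ℕ, 2 ≤ n → lam (n + 2) = lam n) :=
  stmt14_general R hdeg ω lam hω hlam α₂ α₃ α₄ α₅ α₆ hα₂ hrec
end
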